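/- Suppose p = 2, so I = I_1 ∪ I_2. Then for every λ_1, λ_2 > 0, lim_{t→∞} t · (1 − P(M(I_1) ≤ 1 − λ_1/t, M(I_2) ≤ 1 − λ_2/t)) = ε(λ_1^{-1}, λ_2^{-1}). -/

import Mathlib

open MeasureTheory ProbabilityTheory Real Filter Topology
open scoped ProbabilityTheory

noncomputable section

/-- Marginal Fréchet-type distribution function `F_i(t) = exp(-σ t^(-1/η))` for `t > 0`. -/
def margF (σ η t : ℝ) : ℝ := if 0 < t then Real.exp (-σ * t ^ (-1 / η)) else 0

/-- Joint distribution function of the random vector `X`. -/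
def jointF {Ω : Type*} [MeasureSpace Ω] {d : ℕ} (X : Fin d → Ω → ℝ) (t : Fin d → ℝ) : ℝ :=
  (ℙ {ω | ∀ i, X i ω ≤ t i}).toReal

/-- Exponent function `ℓ(t) = -ln F_X(t)`. -/
def expo {Ω : Type*} [MeasureSpace Ω] {d : ℕ} (X : Fin d → Ω → ℝ) (t : Fin d → ℝ) : ℝ :=
  -Real.log (jointF X t)

/-- Block maximum `M(I_j) = max_{i ∈ I_j} F_i(X_i)`, where `I_j = {i | B i = j}`. -/
def blockMax {Ω : Type*} [MeasureSpace Ω] {d p : ℕ} (B : Fin d → Fin p) (σ : Fin d → ℝ)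
    (η : ℝ) (X : Fin d → Ω → ℝ) (j : Fin p) (ω : Ω) : ℝ :=
  sSup ((fun i => margF (σ i) η (X i ω)) '' {i | B i = j})

/-- Extremal dependence function
`ε(λ₁,…,λ_p) = E(max_j M(I_j)^(λ_j)) / (1 - E(max_j M(I_j)^(λ_j)))`. -/
def epsFun {Ω : Type*} [MeasureSpace Ω] {d p : ℕ} (B : Fin d → Fin p) (σ : Fin d → ℝ)
    (η : ℝ) (X : Fin d → Ω → ℝ) (l : Fin p → ℝ) : ℝ :=
  (∫ ω, ⨆ j, blockMax B σ η X j ω ^ l j ∂ℙ) /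
    (1 - ∫ ω, ⨆ j, blockMax B σ η X j ω ^ l j ∂ℙ)

/-- Single-block extremal dependence function `ε_{I_j}(λ)`. -/
def epsBlock {Ω : Type*} [MeasureSpace Ω] {d p : ℕ} (B : Fin d → Fin p) (σ : Fin d → ℝ)
    (η : ℝ) (X : Fin d → Ω → ℝ) (j : Fin p) (l : ℝ) : ℝ :=
  (∫ ω, blockMax B σ η X j ω ^ l ∂ℙ) / (1 - ∫ ω, blockMax B σ η X j ω ^ l ∂ℙ)

/-!
Inverting the marginal transforms, the event `M(I_j) ≤ u_j` for all `j` is the event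
`X_i ≤ (σ_i / -log u_{B i})^η` for all `i`, whose probability is `exp (-ℓ(…))`.
Put `a_i = (σ_i / λ_{B i})^η` and `L = ℓ(a)`. By homogeneity,
`P(max_j M(I_j)^(1/λ_j) ≤ u) = u^L` on `(0, 1)`, so this maximum has mean `L / (L + 1)`
and `ε(λ⁻¹) = L`. For the limit, `λ/t ≤ -log (1 - λ/t) ≤ λ/(t - λ)` squeezes the thresholds
at `u_j = 1 - λ_j/t` between `(t - Λ)^η a` and `t^η a`, where `Λ = ∑ λ_j`; as `ℓ` is antitone
and homogeneous, `L ≤ t ℓ(…) ≤ L t/(t - Λ)`, and `t (1 - e^(-x)) ~ t x` when `t x` converges.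
-/

def margFInv (σ η u : ℝ) : ℝ := (σ / -Real.log u) ^ η

lemma margF_nonneg (σ η t : ℝ) : 0 ≤ margF σ η t := by
  unfold margF; split_ifs <;> positivity

lemma margF_le_one {σ : ℝ} (hσ : 0 ≤ σ) (η t : ℝ) : margF σ η t ≤ 1 := by
  unfold margF; split_ifs with ht
  · rw [Real.exp_le_one_iff, neg_mul, neg_nonpos]; positivity
  · exact zero_le_one

lemma measurable_margF (σ η : ℝ) : Measurable (margF σ η) := by
  unfold margF
  exact Measurable.ite measurableSet_Ioi (by fun_prop) measurable_const

lemma margFInv_pos {σ : ℝ} (hσ : 0 < σ) (η : ℝ) {u : ℝ} (hu0 : 0 < u) (hu1 : u < 1) :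
    0 < margFInv σ η u :=
  Real.rpow_pos_of_pos (div_pos hσ (neg_pos.2 (Real.log_neg hu0 hu1))) η

lemma margF_le_iff {σ η u : ℝ} (hσ : 0 < σ) (hη : 0 < η) (hu0 : 0 < u) (hu1 : u < 1) (x : ℝ) :
    margF σ η x ≤ u ↔ x ≤ margFInv σ η u := by
  have hlog : 0 < -Real.log u := neg_pos.2 (Real.log_neg hu0 hu1)
  unfold margF
  split_ifs with hx
  · rw [← Real.le_log_iff_exp_le hu0, neg_mul, neg_le, ← div_le_iff₀' hσ,
      show (-1 / η : ℝ) = (-η)⁻¹ by field_simp,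
      Real.le_rpow_inv_iff_of_neg (div_pos hlog hσ) hx (neg_neg_of_pos hη),
      Real.rpow_neg (div_pos hlog hσ).le, ← Real.inv_rpow (div_pos hlog hσ).le, inv_div, margFInv]
  · exact iff_of_true hu0.le ((not_lt.1 hx).trans (margFInv_pos hσ η hu0 hu1).le)

lemma margFInv_rpow {σ : ℝ} (hσ : 0 ≤ σ) (η : ℝ) {u : ℝ} (hu0 : 0 < u) (hu1 : u ≤ 1) {a : ℝ}
    (ha : 0 ≤ a) : margFInv σ η (u ^ a) = (-Real.log u)⁻¹ ^ η * (σ / a) ^ η := by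
  have hlog : 0 ≤ (-Real.log u)⁻¹ := inv_nonneg.2 (neg_nonneg.2 (Real.log_nonpos hu0.le hu1))
  rw [margFInv, Real.log_rpow hu0, ← Real.mul_rpow hlog (div_nonneg hσ ha)]
  congr 1
  ring

lemma div_le_neg_log_one_sub_div {a t : ℝ} (ha : 0 ≤ a) (hat : a < t) :
    a / t ≤ -Real.log (1 - a / t) := by
  have h : 0 < 1 - a / t := sub_pos.2 ((div_lt_one (ha.trans_lt hat)).2 hat)
  linarith [Real.log_le_sub_one_of_pos h]

lemma neg_log_one_sub_div_le {a t : ℝ} (ha : 0 ≤ a) (hat : a < t) :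
    -Real.log (1 - a / t) ≤ a / (t - a) := by
  have ht : 0 < t := ha.trans_lt hat
  have h : 0 < 1 - a / t := sub_pos.2 ((div_lt_one ht).2 hat)
  have hinv : 1 - (1 - a / t)⁻¹ = -(a / (t - a)) := by
    field_simp [(sub_pos.2 hat).ne']
    ring
  linarith [Real.one_sub_inv_le_log_of_pos h]

lemma rpow_mul_le_margFInv_one_sub_div {σ η a t : ℝ} (hσ : 0 < σ) (hη : 0 ≤ η) (ha : 0 < a)
    (hat : a < t) : (t - a) ^ η * (σ / a) ^ η ≤ margFInv σ η (1 - a / t) := by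
  rw [← Real.mul_rpow (sub_pos.2 hat).le (div_pos hσ ha).le, margFInv]
  refine Real.rpow_le_rpow (by have := sub_pos.2 hat; positivity) ?_ hη
  have hlog : 0 < -Real.log (1 - a / t) :=
    (div_pos ha (ha.trans hat)).trans_le (div_le_neg_log_one_sub_div ha.le hat)
  calc (t - a) * (σ / a) = σ / (a / (t - a)) := by field_simp [(sub_pos.2 hat).ne']
    _ ≤ σ / -Real.log (1 - a / t) :=
      div_le_div_of_nonneg_left hσ.le hlog (neg_log_one_sub_div_le ha.le hat)

lemma margFInv_one_sub_div_le_rpow_mul {σ η a t : ℝ} (hσ : 0 < σ) (hη : 0 ≤ η) (ha : 0 < a)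
    (hat : a < t) : margFInv σ η (1 - a / t) ≤ t ^ η * (σ / a) ^ η := by
  have ht : 0 < t := ha.trans hat
  rw [← Real.mul_rpow ht.le (div_pos hσ ha).le, margFInv]
  have hlog : 0 < -Real.log (1 - a / t) :=
    (div_pos ha ht).trans_le (div_le_neg_log_one_sub_div ha.le hat)
  refine Real.rpow_le_rpow (div_pos hσ hlog).le ?_ hη
  calc σ / -Real.log (1 - a / t) ≤ σ / (a / t) :=
        div_le_div_of_nonneg_left hσ.le (div_pos ha ht) (div_le_neg_log_one_sub_div ha.le hat)
    _ = t * (σ / a) := by field_simp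

lemma div_one_add_le_one_sub_exp_neg {x : ℝ} (hx : -1 < x) : x / (1 + x) ≤ 1 - Real.exp (-x) := by
  have hprod : Real.exp (-x) * Real.exp x = 1 := by
    rw [← Real.exp_add, neg_add_cancel, Real.exp_zero]
  rw [div_le_iff₀ (by linarith)]
  nlinarith [mul_le_mul_of_nonneg_left (Real.add_one_le_exp x) (Real.exp_pos (-x)).le]

lemma tendsto_mul_one_sub_exp_neg {x : ℝ → ℝ} {L : ℝ}
    (h : Tendsto (fun t => t * x t) atTop (𝓝 L)) :
    Tendsto (fun t => t * (1 - Real.exp (-x t))) atTop (𝓝 L) := by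
  have hx : Tendsto x atTop (𝓝 0) := by
    refine (h.div_atTop tendsto_id).congr' ?_
    filter_upwards [eventually_ne_atTop 0] with t ht
    exact mul_div_cancel_left₀ (x t) ht
  have hlower : Tendsto (fun t => t * x t / (1 + x t)) atTop (𝓝 L) := by
    have := h.div (tendsto_const_nhds.add hx) (by norm_num : (1 : ℝ) + 0 ≠ 0)
    rw [add_zero, div_one] at this
    exact this
  refine tendsto_of_tendsto_of_tendsto_of_le_of_le' hlower h ?_ ?_
  · filter_upwards [eventually_ge_atTop 0, hx.eventually (lt_mem_nhds neg_one_lt_zero)]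
      with t ht hxt
    rw [mul_div_assoc]
    exact mul_le_mul_of_nonneg_left (div_one_add_le_one_sub_exp_neg hxt) ht
  · filter_upwards [eventually_ge_atTop 0] with t ht
    exact mul_le_mul_of_nonneg_left (by linarith [Real.add_one_le_exp (-x t)]) ht

lemma integral_eq_div_add_one_of_measureReal_le_eq_rpow {α : Type*} [MeasurableSpace α]
    {μ : Measure α} [IsProbabilityMeasure μ] {V : α → ℝ} (hV : Measurable V)
    (hV0 : ∀ ω, 0 ≤ V ω) (hV1 : ∀ ω, V ω ≤ 1) {L : ℝ} (hL : -1 < L)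
    (hcdf : ∀ u, 0 < u → u < 1 → μ.real {ω | V ω ≤ u} = u ^ L) :
    ∫ ω, V ω ∂μ = L / (L + 1) := by
  have hint : Integrable V μ :=
    (integrable_const (1 : ℝ)).mono' hV.aestronglyMeasurable
      (Eventually.of_forall fun ω => by rw [Real.norm_eq_abs, abs_of_nonneg (hV0 ω)]; exact hV1 ω)
  have hsurv : Set.EqOn (fun u => μ.real {ω | u < V ω}) (Set.indicator (Set.Iio 1) (1 - · ^ L))
      (Set.Ioi 0) := by
    intro u (hu : 0 < u)
    by_cases hu1 : u < 1
    · have hcompl : {ω | u < V ω} = {ω | V ω ≤ u}ᶜ := by ext; simp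
      show μ.real {ω | u < V ω} = _
      rw [hcompl, measureReal_compl (measurableSet_le hV measurable_const), probReal_univ,
        hcdf u hu hu1, Set.indicator_of_mem (Set.mem_Iio.2 hu1)]
    · have hempty : {ω | u < V ω} = ∅ := by
        ext ω; simpa using (hV1 ω).trans (not_lt.1 hu1)
      simp [hu1, hempty]
  have hIoo : Set.Ioi (0 : ℝ) ∩ Set.Iio 1 = Set.Ioo 0 1 := Set.Ioi_inter_Iio
  rw [hint.integral_eq_integral_meas_lt (Eventually.of_forall hV0),
    setIntegral_congr_fun measurableSet_Ioi hsurv, setIntegral_indicator measurableSet_Iio, hIoo,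
    ← integral_Ioc_eq_integral_Ioo, ← intervalIntegral.integral_of_le zero_le_one,
    intervalIntegral.integral_sub intervalIntegrable_const
      (intervalIntegral.intervalIntegrable_rpow' hL), integral_rpow (Or.inl hL),
    Real.one_rpow, Real.zero_rpow (by linarith)]
  have hL1 : L + 1 ≠ 0 := by linarith
  simp only [intervalIntegral.integral_const, sub_zero, smul_eq_mul, mul_one]
  field_simp
  ring

section BlockMax

variable {Ω : Type*} [MeasureSpace Ω] {d p : ℕ} (B : Fin d → Fin p) (σ : Fin d → ℝ) (η : ℝ)
  (X : Fin d → Ω → ℝ)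

lemma blockMax_nonneg (j : Fin p) (ω : Ω) : 0 ≤ blockMax B σ η X j ω :=
  Real.sSup_nonneg (by rintro _ ⟨i, -, rfl⟩; exact margF_nonneg _ _ _)

lemma blockMax_le_iff {j : Fin p} {ω : Ω} {u : ℝ} (hu : 0 ≤ u) :
    blockMax B σ η X j ω ≤ u ↔ ∀ i, B i = j → margF (σ i) η (X i ω) ≤ u := by
  refine ⟨fun h i hi => le_trans ?_ h, fun h => Real.sSup_le ?_ hu⟩
  · exact le_csSup ((Set.toFinite _).image _).bddAbove ⟨i, hi, rfl⟩
  · rintro _ ⟨i, hi, rfl⟩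
    exact h i hi

lemma blockMax_le_one {σ : Fin d → ℝ} (hσ : ∀ i, 0 ≤ σ i) (j : Fin p) (ω : Ω) :
    blockMax B σ η X j ω ≤ 1 :=
  (blockMax_le_iff B σ η X zero_le_one).2 fun i _ => margF_le_one (hσ i) _ _

lemma measurable_blockMax {X : Fin d → Ω → ℝ} (hX : ∀ i, Measurable (X i)) (j : Fin p) :
    Measurable (blockMax B σ η X j) := by
  unfold blockMax
  simp_rw [sSup_image']
  exact Measurable.iSup fun i => (measurable_margF _ _).comp (hX i)

lemma forall_blockMax_le_iff {σ : Fin d → ℝ} (hσ : ∀ i, 0 < σ i) {η : ℝ} (hη : 0 < η)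
    {u : Fin p → ℝ} (hu0 : ∀ j, 0 < u j) (hu1 : ∀ j, u j < 1) (ω : Ω) :
    (∀ j, blockMax B σ η X j ω ≤ u j) ↔ ∀ i, X i ω ≤ margFInv (σ i) η (u (B i)) := by
  simp only [blockMax_le_iff B σ η X (hu0 _).le]
  refine ⟨fun h i => ?_, fun h j i hi => ?_⟩
  · exact (margF_le_iff (hσ i) hη (hu0 _) (hu1 _) _).1 (h (B i) i rfl)
  · subst hi
    exact (margF_le_iff (hσ i) hη (hu0 _) (hu1 _) _).2 (h i)

end BlockMax

section Exponent

variable {Ω : Type*} [MeasureSpace Ω] {d : ℕ} {X : Fin d → Ω → ℝ}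

lemma expo_nonneg [IsProbabilityMeasure (ℙ : Measure Ω)] (t : Fin d → ℝ) : 0 ≤ expo X t :=
  neg_nonneg.2 (Real.log_nonpos ENNReal.toReal_nonneg
    (ENNReal.toReal_le_of_le_ofReal zero_le_one (by simpa using prob_le_one)))

lemma jointF_eq_exp_neg_expo {t : Fin d → ℝ} (ht : 0 < jointF X t) :
    jointF X t = Real.exp (-expo X t) := by
  rw [expo, neg_neg, Real.exp_log ht]

lemma expo_antitone [IsFiniteMeasure (ℙ : Measure Ω)]
    (hpos : ∀ t : Fin d → ℝ, (∀ i, 0 < t i) → 0 < jointF X t)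
    {s t : Fin d → ℝ} (hs : ∀ i, 0 < s i) (hst : ∀ i, s i ≤ t i) : expo X t ≤ expo X s := by
  refine neg_le_neg (Real.log_le_log (hpos s hs) ?_)
  exact ENNReal.toReal_mono (measure_ne_top _ _)
    (measure_mono fun ω hω i => (hω i).trans (hst i))

lemma expo_rpow_mul {η : ℝ} (hη : η ≠ 0)
    (hhom : ∀ c : ℝ, 0 < c → ∀ t : Fin d → ℝ, (∀ i, 0 < t i) →
      expo X (fun i => c * t i) = c ^ (-1 / η) * expo X t)
    {a : Fin d → ℝ} (ha : ∀ i, 0 < a i) {r : ℝ} (hr : 0 < r) :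
    expo X (fun i => r ^ η * a i) = r⁻¹ * expo X a := by
  rw [hhom _ (Real.rpow_pos_of_pos hr η) a ha, ← Real.rpow_mul hr.le,
    mul_div_cancel₀ (-1) hη, Real.rpow_neg_one]

end Exponent

section Model

variable {Ω : Type*} [MeasureSpace Ω] {d p : ℕ} {X : Fin d → Ω → ℝ} {σ : Fin d → ℝ} {η : ℝ}

lemma prob_forall_blockMax_le (B : Fin d → Fin p) (hσ : ∀ i, 0 < σ i) (hη : 0 < η)
    (hpos : ∀ t : Fin d → ℝ, (∀ i, 0 < t i) → 0 < jointF X t)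
    {u : Fin p → ℝ} (hu0 : ∀ j, 0 < u j) (hu1 : ∀ j, u j < 1) :
    (ℙ {ω | ∀ j, blockMax B σ η X j ω ≤ u j}).toReal
      = Real.exp (-expo X (fun i => margFInv (σ i) η (u (B i)))) := by
  simp only [forall_blockMax_le_iff B X hσ hη hu0 hu1]
  exact jointF_eq_exp_neg_expo (hpos _ fun i => margFInv_pos (hσ i) η (hu0 _) (hu1 _))

theorem epsFun_inv_eq_expo [IsProbabilityMeasure (ℙ : Measure Ω)] (B : Fin d → Fin p)
    (hX : ∀ i, Measurable (X i)) (hσ : ∀ i, 0 < σ i) (hη : 0 < η)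
    (hpos : ∀ t : Fin d → ℝ, (∀ i, 0 < t i) → 0 < jointF X t)
    (hhom : ∀ c : ℝ, 0 < c → ∀ t : Fin d → ℝ, (∀ i, 0 < t i) →
      expo X (fun i => c * t i) = c ^ (-1 / η) * expo X t)
    {lam : Fin p → ℝ} (hlam : ∀ j, 0 < lam j) :
    epsFun B σ η X (fun j => (lam j)⁻¹) = expo X (fun i => (σ i / lam (B i)) ^ η) := by
  set L := expo X (fun i => (σ i / lam (B i)) ^ η)
  set V : Ω → ℝ := fun ω => ⨆ j, blockMax B σ η X j ω ^ (lam j)⁻¹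
  have hM0 := blockMax_nonneg B σ η X
  have hV_le_iff : ∀ ω {u : ℝ}, 0 ≤ u → (V ω ≤ u ↔ ∀ j, blockMax B σ η X j ω ≤ u ^ lam j) := by
    intro ω u hu
    simp only [V, ← Real.rpow_inv_le_iff_of_pos (hM0 _ ω) hu (hlam _)]
    exact ⟨fun h j => (le_ciSup (Set.finite_range _).bddAbove j).trans h,
      fun h => Real.iSup_le h hu⟩
  have hV : Measurable V :=
    Measurable.iSup fun j => (measurable_blockMax B σ η hX j).pow_const _
  have hV0 : ∀ ω, 0 ≤ V ω := fun ω => Real.iSup_nonneg fun j => Real.rpow_nonneg (hM0 j ω) _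
  have hV1 : ∀ ω, V ω ≤ 1 := fun ω => (hV_le_iff ω zero_le_one).2 fun j => by
    rw [Real.one_rpow]; exact blockMax_le_one B η X (fun i => (hσ i).le) j ω
  have hcdf : ∀ u, 0 < u → u < 1 → (ℙ : Measure Ω).real {ω | V ω ≤ u} = u ^ L := by
    intro u hu0 hu1
    have hlog : 0 < (-Real.log u)⁻¹ := inv_pos.2 (neg_pos.2 (Real.log_neg hu0 hu1))
    simp only [measureReal_def, hV_le_iff _ hu0.le]
    rw [prob_forall_blockMax_le B hσ hη hpos (fun j => Real.rpow_pos_of_pos hu0 _)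
        (fun j => Real.rpow_lt_one hu0.le hu1 (hlam j))]
    simp only [margFInv_rpow (hσ _).le η hu0 hu1.le (hlam _).le]
    rw [expo_rpow_mul hη.ne' hhom (fun i => Real.rpow_pos_of_pos (div_pos (hσ i) (hlam _)) η)
      hlog, inv_inv, Real.rpow_def_of_pos hu0]
    congr 1
    ring
  have hL : 0 ≤ L := expo_nonneg _
  have hL1 : L + 1 ≠ 0 := by linarith
  rw [epsFun, integral_eq_div_add_one_of_measureReal_le_eq_rpow hV hV0 hV1 (by linarith) hcdf]
  field_simp
  ring

theorem tendsto_mul_one_sub_prob_forall_blockMax_le [IsFiniteMeasure (ℙ : Measure Ω)]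
    (B : Fin d → Fin p) (hσ : ∀ i, 0 < σ i) (hη : 0 < η)
    (hpos : ∀ t : Fin d → ℝ, (∀ i, 0 < t i) → 0 < jointF X t)
    (hhom : ∀ c : ℝ, 0 < c → ∀ t : Fin d → ℝ, (∀ i, 0 < t i) →
      expo X (fun i => c * t i) = c ^ (-1 / η) * expo X t)
    {lam : Fin p → ℝ} (hlam : ∀ j, 0 < lam j) :
    Tendsto (fun t => t * (1 - (ℙ {ω | ∀ j, blockMax B σ η X j ω ≤ 1 - lam j / t}).toReal))
      atTop (𝓝 (expo X (fun i => (σ i / lam (B i)) ^ η))) := by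
  set a : Fin d → ℝ := fun i => (σ i / lam (B i)) ^ η
  have ha : ∀ i, 0 < a i := fun i => Real.rpow_pos_of_pos (div_pos (hσ i) (hlam _)) η
  set L := expo X a
  set x : ℝ → ℝ := fun t => expo X (fun i => margFInv (σ i) η (1 - lam (B i) / t))
  set Λ := ∑ j, lam j
  have hlam_le : ∀ j, lam j ≤ Λ :=
    fun j => Finset.single_le_sum (fun k _ => (hlam k).le) (Finset.mem_univ j)
  have hΛ : 0 ≤ Λ := Finset.sum_nonneg fun j _ => (hlam j).le
  have hprob : ∀ᶠ t in atTop,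
      (ℙ {ω | ∀ j, blockMax B σ η X j ω ≤ 1 - lam j / t}).toReal = Real.exp (-x t) := by
    filter_upwards [eventually_gt_atTop Λ] with t ht
    have hlt : ∀ j, lam j < t := fun j => (hlam_le j).trans_lt ht
    exact prob_forall_blockMax_le B hσ hη hpos
      (fun j => sub_pos.2 ((div_lt_one (hΛ.trans_lt ht)).2 (hlt j)))
      (fun j => sub_lt_self _ (div_pos (hlam j) (hΛ.trans_lt ht)))
  have hbounds : ∀ᶠ t in atTop, L ≤ t * x t ∧ t * x t ≤ L + Λ * L / (t - Λ) := by
    filter_upwards [eventually_gt_atTop Λ] with t ht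
    have ht0 : 0 < t := hΛ.trans_lt ht
    have hlt : ∀ j, lam j < t := fun j => (hlam_le j).trans_lt ht
    have hthr : ∀ i, 0 < margFInv (σ i) η (1 - lam (B i) / t) := fun i =>
      margFInv_pos (hσ i) η (sub_pos.2 ((div_lt_one ht0).2 (hlt _)))
        (sub_lt_self _ (div_pos (hlam _) ht0))
    have hlow : t⁻¹ * L ≤ x t := by
      rw [← expo_rpow_mul hη.ne' hhom ha ht0]
      exact expo_antitone hpos hthr fun i =>
        margFInv_one_sub_div_le_rpow_mul (hσ i) hη.le (hlam _) (hlt _)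
    have hup : x t ≤ (t - Λ)⁻¹ * L := by
      rw [← expo_rpow_mul hη.ne' hhom ha (sub_pos.2 ht)]
      refine expo_antitone hpos (fun i => mul_pos (Real.rpow_pos_of_pos (sub_pos.2 ht) η) (ha i))
        fun i => le_trans ?_ (rpow_mul_le_margFInv_one_sub_div (hσ i) hη.le (hlam _) (hlt _))
      exact mul_le_mul_of_nonneg_right
        (Real.rpow_le_rpow (sub_pos.2 ht).le (sub_le_sub_left (hlam_le _) t) hη.le) (ha i).le
    constructor
    · rwa [inv_mul_le_iff₀ ht0] at hlow
    · calc t * x t ≤ t * ((t - Λ)⁻¹ * L) := mul_le_mul_of_nonneg_left hup ht0.le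
        _ = L + Λ * L / (t - Λ) := by field_simp [(sub_pos.2 ht).ne']; ring
  have hupper : Tendsto (fun t => L + Λ * L / (t - Λ)) atTop (𝓝 L) := by
    simpa [sub_eq_add_neg] using tendsto_const_nhds.add
      (tendsto_const_nhds.div_atTop (tendsto_atTop_add_const_right _ (-Λ) tendsto_id))
  have hx : Tendsto (fun t => t * x t) atTop (𝓝 L) :=
    tendsto_of_tendsto_of_tendsto_of_le_of_le' tendsto_const_nhds hupper
      (hbounds.mono fun _ h => h.1) (hbounds.mono fun _ h => h.2)
  exact (tendsto_mul_one_sub_exp_neg hx).congr' (hprob.mono fun t ht => by simp only [ht])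

end Model

theorem statement9_general
    {Ω : Type*} [MeasureSpace Ω] [IsProbabilityMeasure (ℙ : Measure Ω)]
    {d : ℕ}
    (X : Fin d → Ω → ℝ) (hX : ∀ i, Measurable (X i))
    (σ : Fin d → ℝ) (hσ : ∀ i, 0 < σ i)
    (η : ℝ) (hη0 : 0 < η)
    (hpos : ∀ t : Fin d → ℝ, (∀ i, 0 < t i) → 0 < jointF X t)
    (hhom : ∀ c : ℝ, 0 < c → ∀ t : Fin d → ℝ, (∀ i, 0 < t i) →
      expo X (fun i => c * t i) = c ^ (-1 / η) * expo X t)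
    (B : Fin d → Fin 2)
    (l1 l2 : ℝ) (hl1 : 0 < l1) (hl2 : 0 < l2) :
    Tendsto (fun t : ℝ => t * (1 - (ℙ {ω | blockMax B σ η X 0 ω ≤ 1 - l1 / t ∧
        blockMax B σ η X 1 ω ≤ 1 - l2 / t}).toReal)) atTop
      (𝓝 (epsFun B σ η X ![l1⁻¹, l2⁻¹])) := by
  have hl : ∀ j, 0 < ![l1, l2] j := Fin.forall_fin_two.2 ⟨hl1, hl2⟩
  have hevent : ∀ t : ℝ, {ω | blockMax B σ η X 0 ω ≤ 1 - l1 / t ∧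
      blockMax B σ η X 1 ω ≤ 1 - l2 / t} = {ω | ∀ j, blockMax B σ η X j ω ≤ 1 - ![l1, l2] j / t} :=
    fun t => by simp [Fin.forall_fin_two]
  have hinv : ![l1⁻¹, l2⁻¹] = fun j => (![l1, l2] j)⁻¹ := by
    ext j; fin_cases j <;> rfl
  simp only [hevent, hinv, epsFun_inv_eq_expo B hX hσ hη0 hpos hhom hl]
  exact tendsto_mul_one_sub_prob_forall_blockMax_le B hσ hη0 hpos hhom hl

theorem statement9
    {Ω : Type*} [MeasureSpace Ω] [IsProbabilityMeasure (ℙ : Measure Ω)]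
    {d : ℕ} (hd : 0 < d)
    (X : Fin d → Ω → ℝ) (hX : ∀ i, Measurable (X i))
    (σ : Fin d → ℝ) (hσ : ∀ i, 0 < σ i)
    (η : ℝ) (hη0 : 0 < η) (hη1 : η ≤ 1)
    (hmarg : ∀ i, ∀ t : ℝ, 0 < t →
      ℙ {ω | X i ω ≤ t} = ENNReal.ofReal (Real.exp (-σ i * t ^ (-1 / η))))
    (hpos : ∀ t : Fin d → ℝ, (∀ i, 0 < t i) → 0 < jointF X t)
    (hhom : ∀ c : ℝ, 0 < c → ∀ t : Fin d → ℝ, (∀ i, 0 < t i) →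
      expo X (fun i => c * t i) = c ^ (-1 / η) * expo X t)
    (B : Fin d → Fin 2) (hB : Function.Surjective B)
    (l1 l2 : ℝ) (hl1 : 0 < l1) (hl2 : 0 < l2) :
    Tendsto (fun t : ℝ => t * (1 - (ℙ {ω | blockMax B σ η X 0 ω ≤ 1 - l1 / t ∧
        blockMax B σ η X 1 ω ≤ 1 - l2 / t}).toReal)) atTop
      (𝓝 (epsFun B σ η X ![l1⁻¹, l2⁻¹])) :=
  statement9_general X hX σ hσ η hη0 hpos hhom B l1 l2 hl1 hl2
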